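/- arXiv:1110.3256 — 2 statements merged into one kernel-verified Lean document; each statement's English description precedes it below -/
import Mathlib

section
/- Let f be a transcendental entire function such that the Julia set J(f) is a spider's web. Then the residual Julia set J_r(f) is nonempty. -/
open Filter Topology Set Bornology

noncomputable section

/-- `f : ℂ → ℂ` is a transcendental entire function: it is differentiable on all of `ℂ`
and is not a polynomial. -/
def TranscendentalEntire (f : ℂ → ℂ) : Prop :=
  Differentiable ℂ f ∧ ¬ ∃ p : Polynomial ℂ, ∀ z, f z = p.eval z

/-- The spherical (chordal) metric on the Riemann sphere `ℂ ∪ {∞}`, realised as `OnePoint ℂ`. -/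
noncomputable def sphericalDist : OnePoint ℂ → OnePoint ℂ → ℝ := fun u v =>
  match u, v with
  | (some z), (some w) => 2 * dist z w / (Real.sqrt (1 + ‖z‖ ^ 2) * Real.sqrt (1 + ‖w‖ ^ 2))
  | (some z), none => 2 / Real.sqrt (1 + ‖z‖ ^ 2)
  | none, (some w) => 2 / Real.sqrt (1 + ‖w‖ ^ 2)
  | none, none => 0

/-- The Fatou set of `f`: the set of points `z` having a neighbourhood `U` on which the
family of iterates of `f` is normal, i.e. every sequence of iterates has a subsequence
converging uniformly on every compact subset of `U` (hence locally uniformly on `U`)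
with respect to the spherical metric on the Riemann sphere `ℂ ∪ {∞}`. -/
def FatouSet (f : ℂ → ℂ) : Set ℂ :=
  {z | ∃ U ∈ 𝓝 z, ∀ s : ℕ → ℕ, StrictMono s → ∃ t : ℕ → ℕ, StrictMono t ∧
    ∃ g : ℂ → OnePoint ℂ, ∀ K ⊆ U, IsCompact K → ∀ ε > 0, ∀ᶠ k in atTop,
      ∀ w ∈ K, sphericalDist (f^[s (t k)] w : ℂ) (g w) < ε}

/-- The Julia set of `f` is the complement of the Fatou set. -/
def JuliaSet (f : ℂ → ℂ) : Set ℂ := (FatouSet f)ᶜ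

/-- `U` is a Fatou component of `f`: a connected component of the Fatou set. -/
def IsFatouComponent (f : ℂ → ℂ) (U : Set ℂ) : Prop :=
  ∃ z ∈ FatouSet f, U = connectedComponentIn (FatouSet f) z

/-- A set `E ⊆ ℂ` is a spider's web if it is connected and there is a sequence of bounded,
simply connected domains `G k` with `G k ⊆ G (k+1)`, `∂(G k) ⊆ E`, and `⋃ k, G k = ℂ`. -/
def SpidersWeb (E : Set ℂ) : Prop :=
  IsConnected E ∧ ∃ G : ℕ → Set ℂ,
    (∀ k, IsOpen (G k) ∧ IsConnected (G k) ∧ IsBounded (G k) ∧ SimplyConnectedSpace (G k)) ∧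
    (∀ k, G k ⊆ G (k + 1)) ∧ (∀ k, frontier (G k) ⊆ E) ∧ (⋃ k, G k) = univ

/-- `X` is locally connected at `z`: every neighbourhood of `z` in the subspace `X`
contains a connected (not necessarily open) neighbourhood of `z` in `X`. -/
def LocallyConnectedAt (X : Set ℂ) (z : ℂ) : Prop :=
  ∀ V ∈ 𝓝[X] z, ∃ W ∈ 𝓝[X] z, W ⊆ V ∧ W ⊆ X ∧ IsConnected W

/-- `z` is a buried point of `f`: it lies in the Julia set but not on the boundary of
any Fatou component. -/
def BuriedPoint (f : ℂ → ℂ) (z : ℂ) : Prop :=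
  z ∈ JuliaSet f ∧ ∀ U : Set ℂ, IsFatouComponent f U → z ∉ frontier U

/-- The residual Julia set: the set of buried points. -/
def ResidualJuliaSet (f : ℂ → ℂ) : Set ℂ := {z | BuriedPoint f z}

/-- A set `S ⊆ ℂ` surrounds a point `z` if `z` lies in a bounded connected component of
the complement of `S`. -/
def Surrounds (S : Set ℂ) (z : ℂ) : Prop :=
  z ∈ Sᶜ ∧ IsBounded (connectedComponentIn Sᶜ z)

/-- A Jordan curve: a subset of `ℂ` homeomorphic to a circle. -/
def IsJordanCurve (C : Set ℂ) : Prop :=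
  Nonempty (C ≃ₜ Metric.sphere (0 : ℂ) 1)

/-- The spherical diameter of a subset of `ℂ`, with respect to the chordal metric on the
Riemann sphere. -/
noncomputable def sphericalDiam (S : Set ℂ) : ℝ :=
  sSup ((fun p : ℂ × ℂ => sphericalDist (p.1 : OnePoint ℂ) (p.2 : OnePoint ℂ)) '' (S ×ˢ S))

/-!
If no Julia point were buried, the Julia set would be covered by the boundaries of the countably
many Fatou components, so by Baire's theorem a single boundary `∂U` contains every Julia point of
some disc `D` centred at a Julia point `z₀`. As the Fatou set is forward invariant, every Julia point
of `fⁿ(D)` lies in the closure of the connected subset `fⁿ(U)` of the Fatou set, which cannot cross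
the Julia curves `∂G_k` of the spider's web. Hence `fⁿ(D)` cannot cross two nested such curves:
once it meets `G_j` it lies in a slightly larger `G_k`. So along any sequence of iterates either a
subsequence stays uniformly bounded on `D`, and Montel's theorem applies, or the iterates tend to
`∞` uniformly on `D`; either way `z₀` would be in the Fatou set.
-/

open Metric OnePoint Function BoundedContinuousFunction

section Topology

variable {X : Type*} [TopologicalSpace X]

theorem IsPreconnected.inter_frontier_nonempty {s t : Set X} (hs : IsPreconnected s)
    (hst : (s ∩ t).Nonempty) (hst' : (s \ t).Nonempty) : (s ∩ frontier t).Nonempty := by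
  by_contra h
  have hcover : s ⊆ interior t ∪ (closure t)ᶜ := fun x hx => by
    by_contra hx'
    simp only [mem_union, mem_compl_iff, not_or, not_not] at hx'
    exact h ⟨x, hx, hx'.2, hx'.1⟩
  rcases hs.subset_or_subset isOpen_interior isClosed_closure.isOpen_compl
    (disjoint_compl_right.mono_left interior_subset_closure) hcover with hint | hext
  · obtain ⟨x, hxs, hxt⟩ := hst'
    exact hxt (interior_subset (hint hxs))
  · obtain ⟨x, hxs, hxt⟩ := hst
    exact hext hxs (subset_closure hxt)

/-- A connected set `A` meeting `O₁` but leaving `O₃` crosses `∂O₁` and `∂O₃`; if those crossing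
points lie in the closure of a connected `V ⊆ F`, then `V` has to cross `∂O₂ ⊆ Fᶜ`. -/
theorem IsPreconnected.subset_of_inter_nonempty_of_nested {A V F O₁ O₂ O₃ : Set X}
    (hA : IsPreconnected A) (hV : IsPreconnected V) (hVF : V ⊆ F) (hAV : A \ F ⊆ closure V)
    (h₁₂ : closure O₁ ⊆ O₂) (h₂₃ : closure O₂ ⊆ O₃) (hO₂ : IsOpen O₂) (hO₃ : IsOpen O₃)
    (hfr₁ : frontier O₁ ⊆ Fᶜ) (hfr₂ : frontier O₂ ⊆ Fᶜ) (hfr₃ : frontier O₃ ⊆ Fᶜ)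
    (hAO₁ : (A ∩ O₁).Nonempty) : A ⊆ O₃ := by
  by_contra hAO₃
  obtain ⟨p, hpA, hpO₃⟩ := not_subset.1 hAO₃
  have hO₁₃ : O₁ ⊆ O₃ := subset_closure.trans (h₁₂.trans (subset_closure.trans h₂₃))
  obtain ⟨y₁, hy₁A, hy₁⟩ := hA.inter_frontier_nonempty hAO₁ ⟨p, hpA, fun h => hpO₃ (hO₁₃ h)⟩
  obtain ⟨y₂, hy₂A, hy₂⟩ := hA.inter_frontier_nonempty
    (hAO₁.mono (inter_subset_inter_right _ hO₁₃)) ⟨p, hpA, hpO₃⟩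
  have hy₁V : y₁ ∈ closure V := hAV ⟨hy₁A, hfr₁ hy₁⟩
  have hy₂V : y₂ ∈ closure V := hAV ⟨hy₂A, hfr₃ hy₂⟩
  have hVO₂ : V ⊆ O₂ ∨ Disjoint V O₂ := by
    by_contra! ⟨hsub, hdisj⟩
    obtain ⟨y, hyV, hy⟩ := hV.inter_frontier_nonempty (not_disjoint_iff_nonempty_inter.1 hdisj)
      (sdiff_nonempty.2 hsub)
    exact hfr₂ hy (hVF hyV)
  rcases hVO₂ with hVO₂ | hVO₂
  · exact ((hO₃.frontier_eq ▸ hy₂).2) (h₂₃ (closure_mono hVO₂ hy₂V))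
  · obtain ⟨w, hwO₂, hwV⟩ := mem_closure_iff.1 hy₁V O₂ hO₂ (h₁₂ (frontier_subset_closure hy₁))
    exact hVO₂.ne_of_mem hwV hwO₂ rfl

end Topology

theorem exists_closedBall_diff_subset_frontier_connectedComponentIn {X : Type*} [MetricSpace X]
    [CompleteSpace X] [TopologicalSpace.SeparableSpace X] [LocallyConnectedSpace X] {F : Set X}
    (hF : IsOpen F) (hne : Fᶜ.Nonempty)
    (hcov : ∀ z ∉ F, ∃ x, z ∈ frontier (connectedComponentIn F x)) :
    ∃ z₀ ∉ F, ∃ x, ∃ r > 0, closedBall z₀ r \ F ⊆ frontier (connectedComponentIn F x) := by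
  have : Nonempty X := ⟨hne.some⟩
  -- every component of `F` is open, hence contains a point of a dense sequence `u`
  obtain ⟨u, hu⟩ := TopologicalSpace.exists_dense_seq X
  have hcov' : ∀ z ∉ F, ∃ i, z ∈ frontier (connectedComponentIn F (u i)) := by
    intro z hz
    obtain ⟨x, hx⟩ := hcov z hz
    have hne : (connectedComponentIn F x).Nonempty := by
      by_contra h
      rw [not_nonempty_iff_eq_empty.1 h, frontier_empty] at hx
      exact hx
    obtain ⟨i, hi⟩ := hu.exists_mem_open hF.connectedComponentIn hne
    exact ⟨i, connectedComponentIn_eq hi ▸ hx⟩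
  have : CompleteSpace (Fᶜ : Set X) := hF.isClosed_compl.completeSpace_coe
  have : Nonempty (Fᶜ : Set X) := hne.to_subtype
  obtain ⟨i, ⟨z₀, hz₀⟩, hint⟩ := nonempty_interior_of_iUnion_of_closed
    (f := fun i => ((↑) : (Fᶜ : Set X) → X) ⁻¹' frontier (connectedComponentIn F (u i)))
    (fun i => isClosed_frontier.preimage continuous_subtype_val)
    (eq_univ_of_forall fun z => mem_iUnion.2 (hcov' z z.2))
  obtain ⟨r, hr, hball⟩ := nhds_basis_closedBall.mem_iff.1 (mem_interior_iff_mem_nhds.1 hint)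
  exact ⟨z₀, hz₀, u i, r, hr, fun y ⟨hy, hyF⟩ => hball (a := ⟨y, hyF⟩) hy⟩

theorem EquicontinuousOn.exists_tendstoUniformlyOn_subseq {X β : Type*} [TopologicalSpace X]
    [PseudoMetricSpace β] [T2Space β] {F : ℕ → X → β} {K : Set X} {S : Set β}
    (hF : EquicontinuousOn F K) (hK : IsCompact K) (hS : IsCompact S)
    (hFS : ∀ n, ∀ x ∈ K, F n x ∈ S) :
    ∃ φ : ℕ → ℕ, StrictMono φ ∧ ∃ g : X → β, TendstoUniformlyOn (F ∘ φ) g atTop K := by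
  have : CompactSpace K := isCompact_iff_compactSpace.1 hK
  let G : ℕ → K →ᵇ β := fun n =>
    .mkOfCompact ⟨K.domRestrict (F n), (hF.continuousOn n).domRestrict⟩
  have hGeq : Equicontinuous ((↑) : range G → K → β) := by
    have := ((equicontinuous_restrict_iff F).2 hF).comp fun c : range G => c.2.choose
    convert this using 1
    ext c : 1
    exact (congrArg DFunLike.coe c.2.choose_spec).symm
  have hcpt := BoundedContinuousFunction.arzela_ascoli S hS (range G)
    (by rintro _ x ⟨n, rfl⟩; exact hFS n x x.2) hGeq
  obtain ⟨a, -, φ, hφ, hlim⟩ := hcpt.tendsto_subseq fun n => subset_closure (mem_range_self n)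
  refine ⟨φ, hφ, extend Subtype.val a (F 0), ?_⟩
  rw [tendstoUniformlyOn_iff_restrict]
  have hext : K.domRestrict (extend Subtype.val a (F 0)) = a :=
    funext fun x => Subtype.val_injective.extend_apply _ _ x
  rw [hext]
  exact BoundedContinuousFunction.tendsto_iff_tendstoUniformly.1 hlim

theorem DifferentiableOn.lipschitzOnWith_closedBall {E : Type*} [NormedAddCommGroup E]
    [NormedSpace ℂ E] {f : ℂ → E} {z : ℂ} {r R M : ℝ} (hf : DifferentiableOn ℂ f (closedBall z R))
    (hM : ∀ w ∈ closedBall z R, ‖f w‖ ≤ M) (hr : r < R) :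
    LipschitzOnWith (M / (R - r)).toNNReal f (closedBall z r) := by
  have hsub : ∀ w ∈ closedBall z r, closedBall w (R - r) ⊆ closedBall z R := fun w hw =>
    closedBall_subset_closedBall' (by rw [mem_closedBall] at hw; linarith)
  refine (convex_closedBall z r).lipschitzOnWith_of_nnnorm_deriv_le (fun w hw => ?_) fun w hw => ?_
  · exact hf.differentiableAt (mem_of_superset (closedBall_mem_nhds w (sub_pos.2 hr)) (hsub w hw))
  · rw [← NNReal.coe_le_coe, coe_nnnorm, Real.coe_toNNReal']
    exact (Complex.norm_deriv_le_of_forall_mem_sphere_norm_le (sub_pos.2 hr)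
      (hf.diffContOnCl_ball (hsub w hw)) fun u hu =>
        hM u (hsub w hw (sphere_subset_closedBall hu))).trans (le_max_left _ _)

theorem exists_tendstoUniformlyOn_subseq_of_norm_le {E : Type*} [NormedAddCommGroup E]
    [NormedSpace ℂ E] [ProperSpace E] {F : ℕ → ℂ → E} {z : ℂ} {r R M : ℝ}
    (hF : ∀ n, DifferentiableOn ℂ (F n) (closedBall z R))
    (hM : ∀ n, ∀ w ∈ closedBall z R, ‖F n w‖ ≤ M) (hr : r < R) :
    ∃ φ : ℕ → ℕ, StrictMono φ ∧ ∃ g : ℂ → E, TendstoUniformlyOn (F ∘ φ) g atTop (closedBall z r) :=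
  have hsub : closedBall z r ⊆ closedBall z R := closedBall_subset_closedBall hr.le
  ((LipschitzOnWith.uniformEquicontinuousOn F _ fun n =>
    (hF n).lipschitzOnWith_closedBall (hM n) hr).equicontinuousOn).exists_tendstoUniformlyOn_subseq
    (isCompact_closedBall z r) (isCompact_closedBall 0 M)
    fun n w hw => mem_closedBall_zero_iff.2 (hM n w (hsub hw))

theorem sphericalDist_coe_coe_le (a b : ℂ) : sphericalDist a b ≤ 2 * dist a b := by
  have ha : 1 ≤ √(1 + ‖a‖ ^ 2) := Real.one_le_sqrt.2 (le_add_of_nonneg_right (by positivity))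
  have hb : 1 ≤ √(1 + ‖b‖ ^ 2) := Real.one_le_sqrt.2 (le_add_of_nonneg_right (by positivity))
  exact div_le_self (by positivity) (one_le_mul_of_one_le_of_one_le ha hb)

theorem sphericalDist_coe_infty_lt {a : ℂ} {ε : ℝ} (hε : 0 < ε) (ha : 2 / ε < ‖a‖) :
    sphericalDist a ∞ < ε := by
  have hsqrt : ‖a‖ < √(1 + ‖a‖ ^ 2) := Real.lt_sqrt (norm_nonneg a) |>.2 (by linarith)
  have hpos : 0 < √(1 + ‖a‖ ^ 2) := by positivity
  change 2 / √(1 + ‖a‖ ^ 2) < ε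
  rw [div_lt_iff₀ hpos, ← div_lt_iff₀' hε]
  exact ha.trans hsqrt

theorem TendstoUniformlyOn.eventually_sphericalDist_lt {ι : Type*} {F : ι → ℂ → ℂ} {g : ℂ → ℂ}
    {l : Filter ι} {K : Set ℂ} (h : TendstoUniformlyOn F g l K) {ε : ℝ} (hε : 0 < ε) :
    ∀ᶠ n in l, ∀ w ∈ K, sphericalDist (F n w) (g w) < ε := by
  filter_upwards [Metric.tendstoUniformlyOn_iff.1 h (ε / 2) (half_pos hε)] with n hn w hw
  calc sphericalDist (F n w) (g w) ≤ 2 * dist (F n w) (g w) := sphericalDist_coe_coe_le _ _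
    _ < 2 * (ε / 2) := by rw [dist_comm]; gcongr; exact hn w hw
    _ = ε := by ring

theorem isOpen_fatouSet (f : ℂ → ℂ) : IsOpen (FatouSet f) :=
  isOpen_iff_mem_nhds.2 fun _ ⟨U, hU, hnormal⟩ =>
    mem_of_superset (interior_mem_nhds.2 hU) fun _ hz =>
      ⟨U, mem_interior_iff_mem_nhds.1 hz, hnormal⟩

theorem TranscendentalEntire.isOpenMap {f : ℂ → ℂ} (hf : TranscendentalEntire f) :
    IsOpenMap f :=
  (AnalyticOnNhd.is_constant_or_isOpenMap fun z _ => hf.1.analyticAt z).resolve_left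
    fun ⟨c, hc⟩ => hf.2 ⟨Polynomial.C c, fun z => by rw [hc, Polynomial.eval_C]⟩

theorem mapsTo_fatouSet {f : ℂ → ℂ} (hf : IsOpenMap f) :
    MapsTo f (FatouSet f) (FatouSet f) := by
  rintro z ⟨U, hU, hnormal⟩
  obtain ⟨δ, hδ, hδU⟩ := nhds_basis_closedBall.mem_iff.1 hU
  refine ⟨f '' ball z δ, hf.image_mem_nhds (ball_mem_nhds z hδ), fun s hs => ?_⟩
  obtain ⟨t, ht, g, hg⟩ := hnormal (s · + 1) fun a b hab => Nat.succ_lt_succ (hs hab)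
  -- on `f '' ball z δ`, follow the limit along a chosen preimage
  refine ⟨t, ht, g ∘ invFunOn f (ball z δ), fun K hK _ ε hε => ?_⟩
  filter_upwards [hg _ hδU (isCompact_closedBall z δ) ε hε] with k hk y hy
  have hy' : ∃ x ∈ ball z δ, f x = y := hK hy
  have := hk _ (ball_subset_closedBall (invFunOn_mem hy'))
  rwa [iterate_succ_apply, invFunOn_eq hy'] at this

theorem mem_fatouSet_of_bounded_or_escaping {f : ℂ → ℂ} (hf : Differentiable ℂ f) {z : ℂ}
    {r : ℝ} (hr : 0 < r) (h : ∀ R, ∃ M, ∀ n, (∃ w ∈ closedBall z r, ‖f^[n] w‖ ≤ R) →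
      ∀ w ∈ closedBall z r, ‖f^[n] w‖ ≤ M) :
    z ∈ FatouSet f := by
  refine ⟨closedBall z (r / 2), closedBall_mem_nhds z (half_pos hr), fun s hs => ?_⟩
  suffices ∃ t : ℕ → ℕ, StrictMono t ∧ ∃ g : ℂ → OnePoint ℂ, ∀ ε > 0, ∀ᶠ k in atTop,
      ∀ w ∈ closedBall z (r / 2), sphericalDist (f^[s (t k)] w : ℂ) (g w) < ε by
    obtain ⟨t, ht, g, hg⟩ := this
    exact ⟨t, ht, g, fun K hK _ ε hε => (hg ε hε).mono fun k hk w hw => hk w (hK hw)⟩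
  by_cases hbdd : ∃ R, ∃ᶠ k in atTop, ∃ w ∈ closedBall z r, ‖f^[s k] w‖ ≤ R
  · obtain ⟨R, hR⟩ := hbdd
    obtain ⟨M, hM⟩ := h R
    obtain ⟨φ, hφ, hφR⟩ := extraction_of_frequently_atTop hR
    obtain ⟨ψ, hψ, g, hg⟩ := exists_tendstoUniformlyOn_subseq_of_norm_le
      (fun k => (hf.iterate (s (φ k))).differentiableOn) (fun k => hM _ (hφR k)) (half_lt_self hr)
    exact ⟨φ ∘ ψ, hφ.comp hψ, fun w => g w, fun ε hε => hg.eventually_sphericalDist_lt hε⟩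
  · push Not at hbdd
    refine ⟨id, strictMono_id, fun _ => ∞, fun ε hε => ?_⟩
    filter_upwards [hbdd (2 / ε)] with k hk w hw
    exact sphericalDist_coe_infty_lt hε
      (hk w (closedBall_subset_closedBall (half_le_self hr.le) hw))

theorem image_iterate_subset_of_nested {f : ℂ → ℂ} (hcont : Continuous f) (hopen : IsOpenMap f)
    {K U O₁ O₂ O₃ : Set ℂ} (hK : IsPreconnected K) (hU : IsPreconnected U)
    (hUF : U ⊆ FatouSet f) (hKU : K \ FatouSet f ⊆ closure U)
    (h₁₂ : closure O₁ ⊆ O₂) (h₂₃ : closure O₂ ⊆ O₃) (hO₂ : IsOpen O₂) (hO₃ : IsOpen O₃)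
    (hfr₁ : frontier O₁ ⊆ JuliaSet f) (hfr₂ : frontier O₂ ⊆ JuliaSet f)
    (hfr₃ : frontier O₃ ⊆ JuliaSet f) (n : ℕ) (hn : (f^[n] '' K ∩ O₁).Nonempty) :
    f^[n] '' K ⊆ O₃ := by
  have hcontₙ : Continuous f^[n] := hcont.iterate n
  have hmaps : MapsTo f^[n] (FatouSet f) (FatouSet f) := (mapsTo_fatouSet hopen).iterate n
  refine (hK.image _ hcontₙ.continuousOn).subset_of_inter_nonempty_of_nested
    (hU.image _ hcontₙ.continuousOn) (hmaps.mono_left hUF).image_subset ?_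
    h₁₂ h₂₃ hO₂ hO₃ hfr₁ hfr₂ hfr₃ hn
  rintro _ ⟨⟨w, hwK, rfl⟩, hwF⟩
  exact image_closure_subset_closure_image hcontₙ ⟨w, hKU ⟨hwK, fun h => hwF (hmaps h)⟩, rfl⟩

/-- If the Julia set of a transcendental entire function is a spider's web, then the
residual Julia set is nonempty. -/
theorem residualJulia_nonempty_of_spidersWeb (f : ℂ → ℂ) (hf : TranscendentalEntire f)
    (hsw : SpidersWeb (JuliaSet f)) :
    (ResidualJuliaSet f).Nonempty := by
  by_contra hempty
  obtain ⟨hJ, G, hG, hGsucc, hGfr, hGcov⟩ := hsw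
  have hfrontier : ∀ z ∉ FatouSet f, ∃ x, z ∈ frontier (connectedComponentIn (FatouSet f) x) := by
    intro z hz
    by_contra! h
    exact hempty ⟨z, hz, fun U ⟨x, _, hU⟩ => hU ▸ h x⟩
  obtain ⟨z₀, hz₀, x, r, hr, hball⟩ := exists_closedBall_diff_subset_frontier_connectedComponentIn
    (isOpen_fatouSet f) hJ.nonempty hfrontier
  have habsorb : ∀ K : Set ℂ, IsCompact K → ∃ k, K ⊆ G k := fun K hK =>
    hK.elim_directed_cover G (fun k => (hG k).1) (hGcov ▸ subset_univ K)
      (monotone_nat_of_le_succ hGsucc).directed_le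
  have hnext : ∀ k, ∃ k', closure (G k) ⊆ G k' := fun k =>
    habsorb _ (hG k).2.2.1.isCompact_closure
  refine hz₀ (mem_fatouSet_of_bounded_or_escaping hf.1 hr fun R => ?_)
  obtain ⟨j, hj⟩ := habsorb _ (isCompact_closedBall 0 R)
  obtain ⟨j₁, hj₁⟩ := hnext j
  obtain ⟨j₂, hj₂⟩ := hnext j₁
  obtain ⟨M, hM⟩ := isBounded_iff_forall_norm_le.1 (hG j₂).2.2.1
  refine ⟨M, fun n ⟨w, hw, hwR⟩ w' hw' => hM _ ?_⟩
  exact image_iterate_subset_of_nested hf.1.continuous hf.isOpenMap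
    (convex_closedBall z₀ r).isPreconnected
    isPreconnected_connectedComponentIn (connectedComponentIn_subset _ _)
    (hball.trans frontier_subset_closure) hj₁ hj₂ (hG j₁).1 (hG j₂).1 (hGfr j) (hGfr j₁) (hGfr j₂)
    n ⟨_, mem_image_of_mem _ hw, hj (mem_closedBall_zero_iff.2 hwR)⟩ (mem_image_of_mem _ hw')

end
end

section
/- Let g(z) = sin z. Then the residual Julia set J_r(g) is not a spider's web. -/
open Filter Topology Set Bornology

noncomputable section

/-!
The parabolic fixed point `0` of `sin` attracts the sector `|Im z| < |Re z| / 4, |Re z| < 1`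
locally uniformly (on the right half `Re (sin z) ≤ Re z - (Re z)³ / 16`), so that sector lies in
the Fatou set. On the vertical line `π / 2 + iy` we have `sin = cosh y`, real and `≥ 1`, and two
more applications of `sin` land in the sector unless `sin (cosh y) = 0`. These exceptional `y`
are isolated zeros of a real-analytic function, so every Julia point of the line is a limit of a
Fatou segment of the line and therefore lies on the boundary of a Fatou component: the line
contains no buried point. But a connected unbounded line through `π / 2` meets the boundary of
every bounded domain containing `π / 2`, and in a spider's web these boundaries are buried.
-/

open scoped Real

section FatouSet

variable {f : ℂ → ℂ}

lemma mem_fatouSet_of_apply_mem (hf : Continuous f) {z : ℂ} (h : f z ∈ FatouSet f) :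
    z ∈ FatouSet f := by
  obtain ⟨U, hU, hnormal⟩ := h
  refine ⟨f ⁻¹' U, hf.continuousAt.preimage_mem_nhds hU, fun s hs => ?_⟩
  have hpos (k : ℕ) : 0 < s (k + 1) := (Nat.zero_le _).trans_lt (hs k.succ_pos)
  obtain ⟨t, ht, g, hg⟩ := hnormal (fun k => s (k + 1) - 1) fun a b hab => by
    have := hs (show a + 1 < b + 1 by omega); have := hpos a; dsimp only; omega
  refine ⟨fun k => t k + 1, fun a b hab => Nat.succ_lt_succ (ht hab), g ∘ f,
    fun K hKU hK ε hε => ?_⟩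
  filter_upwards [hg (f '' K) (image_subset_iff.2 hKU) (hK.image hf) ε hε] with k hk w hw
  have hshift : f^[s (t k + 1)] w = f^[s (t k + 1) - 1] (f w) := by
    rw [← Function.iterate_succ_apply, Nat.succ_eq_add_one, Nat.sub_add_cancel (hpos _)]
  simpa [hshift] using hk (f w) (mem_image_of_mem f hw)

lemma mem_fatouSet_of_iterate_mem (hf : Continuous f) {z : ℂ} {n : ℕ}
    (h : f^[n] z ∈ FatouSet f) : z ∈ FatouSet f := by
  induction n generalizing z with
  | zero => exact h
  | succ n ih => exact mem_fatouSet_of_apply_mem hf (ih (Function.iterate_succ_apply f n z ▸ h))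

lemma notMem_residualJuliaSet_of_mem_closure {S : Set ℂ} (hS : IsPreconnected S)
    (hSF : S ⊆ FatouSet f) {z : ℂ} (hz : z ∈ closure S) : z ∉ ResidualJuliaSet f := by
  rintro ⟨hzJ, hzburied⟩
  obtain ⟨w, hw⟩ := closure_nonempty_iff.1 ⟨z, hz⟩
  refine hzburied _ ⟨w, hSF hw, rfl⟩
    ⟨closure_mono (hS.subset_connectedComponentIn hw hSF) hz, ?_⟩
  exact fun hzU => hzJ (connectedComponentIn_subset _ _ (interior_subset hzU))

end FatouSet

lemma sphericalDist_zero_le (v : ℂ) : sphericalDist v (0 : ℂ) ≤ 2 * ‖v‖ := by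
  have hsqrt : 1 ≤ √(1 + ‖v‖ ^ 2) :=
    Real.one_le_sqrt.2 (le_add_of_nonneg_right (by positivity))
  change 2 * dist v 0 / (√(1 + ‖v‖ ^ 2) * √(1 + ‖(0 : ℂ)‖ ^ 2)) ≤ 2 * ‖v‖
  rw [norm_zero, dist_zero_right, div_le_iff₀ (by positivity)]
  norm_num
  nlinarith [norm_nonneg v]

namespace Real

lemma cosh_le_one_add_sq {y : ℝ} (hy : |y| ≤ 1) : cosh y ≤ 1 + y ^ 2 := by
  have hpos := abs_le.1 (abs_exp_sub_one_sub_id_le hy)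
  have hneg := abs_le.1 (abs_exp_sub_one_sub_id_le (x := -y) (by rwa [abs_neg]))
  rw [cosh_eq]
  nlinarith

lemma abs_sinh_le_abs_mul_cosh (y : ℝ) : |sinh y| ≤ |y| * cosh y := by
  rw [abs_sinh, ← cosh_abs]
  rcases (abs_nonneg y).eq_or_lt with h | h
  · simp [← h]
  -- mean value theorem: `sinh |y| = |y| * cosh ξ` for some `ξ ∈ (0, |y|)`
  obtain ⟨ξ, hξ, hslope⟩ := exists_deriv_eq_slope sinh h continuous_sinh.continuousOn
    differentiable_sinh.differentiableOn
  rw [deriv_sinh, sinh_zero, sub_zero, sub_zero, eq_div_iff h.ne'] at hslope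
  rw [← hslope, mul_comm]
  have hcosh : cosh ξ ≤ cosh |y| :=
    cosh_le_cosh.2 (by rw [abs_of_pos hξ.1, abs_of_pos h]; exact hξ.2.le)
  exact mul_le_mul_of_nonneg_left hcosh h.le

lemma sin_mul_cosh_le {x y : ℝ} (hx0 : 0 ≤ x) (hx1 : x ≤ 1) (hy : |y| ≤ x / 4) :
    sin x * cosh y ≤ x - x ^ 3 / 16 := by
  have hsin := (abs_le.1 (sin_bound (x := x) (by rwa [abs_of_nonneg hx0]))).2
  rw [abs_of_nonneg hx0] at hsin
  have hy2 : y ^ 2 ≤ (x / 4) ^ 2 := sq_le_sq' (abs_le.1 hy).1 (abs_le.1 hy).2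
  have hcosh := cosh_le_one_add_sq (hy.trans (by linarith))
  have hsin0 : 0 ≤ sin x := sin_nonneg_of_nonneg_of_le_pi hx0 (by linarith [pi_gt_three])
  calc sin x * cosh y ≤ (x - x ^ 3 / 6 + x ^ 5 / 100) * (1 + x ^ 2 / 16) :=
        mul_le_mul (by linarith) (by linarith) (cosh_pos y).le (by nlinarith)
    _ ≤ x - x ^ 3 / 16 := by
        have hx2 : 0 ≤ 1 - x ^ 2 := by nlinarith
        have hx3 : 0 ≤ x ^ 3 := by positivity
        nlinarith [mul_nonneg hx3 hx2, mul_nonneg (mul_nonneg hx3 hx2) hx2]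

lemma abs_cos_mul_sinh_le {x y : ℝ} (hx0 : 0 ≤ x) (hx1 : x ≤ 1) (hy : |y| ≤ x / 4) :
    |cos x * sinh y| ≤ sin x * cosh y / 4 := by
  have hcos : 0 < cos x :=
    cos_pos_of_mem_Ioo ⟨by linarith [pi_gt_three], by linarith [pi_gt_three]⟩
  have hxcos : x * cos x ≤ sin x := by
    have := le_tan hx0 (by linarith [pi_gt_three])
    rwa [tan_eq_sin_div_cos, le_div_iff₀ hcos] at this
  rw [abs_mul, abs_of_pos hcos]
  calc cos x * |sinh y| ≤ cos x * (x / 4 * cosh y) := by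
        gcongr
        exact (abs_sinh_le_abs_mul_cosh y).trans (by gcongr)
    _ ≤ sin x * cosh y / 4 := by nlinarith [cosh_pos y]

end Real

namespace Complex

lemma sin_re (z : ℂ) : (sin z).re = Real.sin z.re * Real.cosh z.im := by
  rw [sin_eq]
  simp [← ofReal_sin, ← ofReal_cos, ← ofReal_sinh, ← ofReal_cosh]

lemma sin_im (z : ℂ) : (sin z).im = Real.cos z.re * Real.sinh z.im := by
  rw [sin_eq]
  simp [← ofReal_sin, ← ofReal_cos, ← ofReal_sinh, ← ofReal_cosh]

lemma sin_iterate_neg (n : ℕ) (z : ℂ) : sin^[n] (-z) = -sin^[n] z := by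
  induction n with
  | zero => rfl
  | succ n ih => rw [Function.iterate_succ_apply', Function.iterate_succ_apply', ih, sin_neg]

lemma sin_pi_div_two_add_mul_I (y : ℝ) : sin (π / 2 + y * I) = Real.cosh y := by
  rw [add_comm, sin_add_pi_div_two, cos_mul_I, ofReal_cosh]

end Complex

def sinPetal : Set ℂ := {z | 0 ≤ z.re ∧ z.re ≤ 1 ∧ |z.im| ≤ z.re / 4}

def petalBound (x : ℝ) : ℝ := x - x ^ 3 / 16

lemma petalBound_mem_Icc {x : ℝ} (hx : x ∈ Icc 0 1) : petalBound x ∈ Icc 0 1 := by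
  obtain ⟨hx0, hx1⟩ := hx
  unfold petalBound
  constructor <;> nlinarith [pow_le_one₀ hx0 hx1 (n := 2)]

lemma petalBound_le_self {x : ℝ} (hx : 0 ≤ x) : petalBound x ≤ x := by
  unfold petalBound
  linarith [pow_nonneg hx 3]

lemma petalBound_monotoneOn : MonotoneOn petalBound (Icc 0 1) := by
  rintro x ⟨hx0, hx1⟩ y ⟨hy0, hy1⟩ hxy
  have hcube : y ^ 3 - x ^ 3 = (y - x) * (x ^ 2 + x * y + y ^ 2) := by ring
  have hquad : x ^ 2 + x * y + y ^ 2 ≤ 3 := by nlinarith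
  unfold petalBound
  nlinarith [mul_le_mul_of_nonneg_left hquad (sub_nonneg.2 hxy)]

lemma sin_mem_sinPetal {z : ℂ} (hz : z ∈ sinPetal) :
    Complex.sin z ∈ sinPetal ∧ (Complex.sin z).re ≤ petalBound z.re := by
  obtain ⟨hx0, hx1, hy⟩ := hz
  have hre := Real.sin_mul_cosh_le hx0 hx1 hy
  have hsin0 : 0 ≤ Real.sin z.re :=
    Real.sin_nonneg_of_nonneg_of_le_pi hx0 (by linarith [Real.pi_gt_three])
  rw [← Complex.sin_re] at hre
  refine ⟨⟨?_, ?_, ?_⟩, hre⟩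
  · rw [Complex.sin_re]
    exact mul_nonneg hsin0 (Real.cosh_pos _).le
  · exact hre.trans ((petalBound_le_self hx0).trans hx1)
  · rw [Complex.sin_im, Complex.sin_re]
    exact Real.abs_cos_mul_sinh_le hx0 hx1 hy

lemma petalBound_iterate_mem_Icc (n : ℕ) : petalBound^[n] 1 ∈ Icc 0 1 := by
  induction n with
  | zero => exact ⟨zero_le_one, le_rfl⟩
  | succ n ih => rw [Function.iterate_succ_apply']; exact petalBound_mem_Icc ih

lemma tendsto_petalBound_iterate : Tendsto (fun n => petalBound^[n] 1) atTop (𝓝 0) := by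
  have hanti : Antitone fun n => petalBound^[n] 1 := antitone_nat_of_succ_le fun n => by
    rw [Function.iterate_succ_apply']
    exact petalBound_le_self (petalBound_iterate_mem_Icc n).1
  have hlim := tendsto_atTop_ciInf hanti ⟨0, by
    rintro _ ⟨n, rfl⟩; exact (petalBound_iterate_mem_Icc n).1⟩
  have hfix := isFixedPt_of_tendsto_iterate hlim (by unfold petalBound; fun_prop)
  set L := ⨅ n, petalBound^[n] 1
  have hzero : L = 0 := by
    have hL : L - L ^ 3 / 16 = L := hfix
    exact pow_eq_zero_iff (n := 3) (by norm_num) |>.1 (by linarith)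
  rwa [hzero] at hlim

lemma sin_iterate_mem_sinPetal {z : ℂ} (hz : z ∈ sinPetal) (n : ℕ) :
    Complex.sin^[n] z ∈ sinPetal ∧ (Complex.sin^[n] z).re ≤ petalBound^[n] 1 := by
  induction n with
  | zero => exact ⟨hz, hz.2.1⟩
  | succ n ih =>
    obtain ⟨hmem, hle⟩ := ih
    rw [Function.iterate_succ_apply', Function.iterate_succ_apply']
    refine ⟨(sin_mem_sinPetal hmem).1, (sin_mem_sinPetal hmem).2.trans ?_⟩
    exact petalBound_monotoneOn ⟨hmem.1, hmem.2.1⟩ (petalBound_iterate_mem_Icc n) hle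

lemma norm_le_of_mem_sinPetal {z : ℂ} (hz : z ∈ sinPetal) : ‖z‖ ≤ 2 * z.re := by
  have := Complex.norm_le_abs_re_add_abs_im z
  obtain ⟨hre, -, him⟩ := hz
  rw [abs_of_nonneg hre] at this
  linarith

lemma norm_sin_iterate_le {z : ℂ} (hz : z ∈ sinPetal ∨ -z ∈ sinPetal) (n : ℕ) :
    ‖Complex.sin^[n] z‖ ≤ 2 * petalBound^[n] 1 := by
  have key {w : ℂ} (hw : w ∈ sinPetal) : ‖Complex.sin^[n] w‖ ≤ 2 * petalBound^[n] 1 := by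
    obtain ⟨hmem, hle⟩ := sin_iterate_mem_sinPetal hw n
    linarith [norm_le_of_mem_sinPetal hmem]
  rcases hz with hz | hz
  · exact key hz
  · simpa [Complex.sin_iterate_neg] using key hz

lemma mem_fatouSet_sin_of_abs_im_lt {z : ℂ} (hre : |z.re| < 1) (him : |z.im| < |z.re| / 4) :
    z ∈ FatouSet Complex.sin := by
  set U : Set ℂ := {w | |w.re| < 1 ∧ |w.im| < |w.re| / 4}
  have hU : IsOpen U := by
    show IsOpen ({w : ℂ | |w.re| < 1} ∩ {w | |w.im| < |w.re| / 4})
    exact (isOpen_lt (by fun_prop) continuous_const).inter (isOpen_lt (by fun_prop) (by fun_prop))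
  have hUpetal {w : ℂ} (hw : w ∈ U) : w ∈ sinPetal ∨ -w ∈ sinPetal := by
    obtain ⟨h1, h2⟩ := hw
    rcases le_or_gt 0 w.re with h | h
    · rw [abs_of_nonneg h] at h1 h2
      exact .inl ⟨h, h1.le, h2.le⟩
    · rw [abs_of_neg h] at h1 h2
      exact .inr ⟨by simp; linarith, by simp; linarith, by simp; linarith⟩
  refine ⟨U, hU.mem_nhds ⟨hre, him⟩, fun s hs => ⟨id, strictMono_id, fun _ => (0 : ℂ),
    fun K hKU _ ε hε => ?_⟩⟩
  filter_upwards [(tendsto_petalBound_iterate.comp hs.tendsto_atTop).eventually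
    (gt_mem_nhds (by positivity : 0 < ε / 4))] with k hk w hw
  calc sphericalDist (Complex.sin^[s (id k)] w : ℂ) (0 : ℂ)
      ≤ 2 * ‖Complex.sin^[s k] w‖ := sphericalDist_zero_le _
    _ ≤ 2 * (2 * petalBound^[s k] 1) := by gcongr; exact norm_sin_iterate_le (hUpetal (hKU hw)) _
    _ < ε := by simp only [Function.comp_apply] at hk; linarith

lemma ofReal_mem_fatouSet_sin {u : ℝ} (h0 : u ≠ 0) (h1 : |u| < 1) :
    (u : ℂ) ∈ FatouSet Complex.sin :=
  mem_fatouSet_sin_of_abs_im_lt (by simpa) (by simpa using abs_pos.2 h0)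

lemma mem_fatouSet_sin_of_sin_cosh_ne_zero {y : ℝ} (h : Real.sin (Real.cosh y) ≠ 0) :
    (π / 2 + y * Complex.I : ℂ) ∈ FatouSet Complex.sin := by
  refine mem_fatouSet_of_iterate_mem Complex.continuous_sin (n := 3) ?_
  have hiter : Complex.sin^[3] (π / 2 + y * Complex.I) =
      (Real.sin (Real.sin (Real.cosh y)) : ℂ) := by
    show Complex.sin (Complex.sin (Complex.sin _)) = _
    rw [Complex.sin_pi_div_two_add_mul_I, ← Complex.ofReal_sin, ← Complex.ofReal_sin]
  have hle : |Real.sin (Real.cosh y)| ≤ 1 := Real.abs_sin_le_one _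
  rw [hiter]
  refine ofReal_mem_fatouSet_sin ?_ ((Real.abs_sin_lt_abs h).trans_le hle)
  have := Real.mul_abs_le_abs_sin (hle.trans (by linarith [Real.pi_gt_three]))
  exact abs_pos.1 (lt_of_lt_of_le (by positivity) this)

lemma eventually_sin_cosh_ne_zero (y : ℝ) :
    ∀ᶠ t in 𝓝[≠] y, Real.sin (Real.cosh t) ≠ 0 := by
  have han : AnalyticOnNhd ℝ (fun t => Real.sin (Real.cosh t)) univ :=
    fun _ _ => Real.analyticAt_sin.comp Real.analyticAt_cosh
  refine Filter.not_frequently.1 fun hfreq => ?_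
  have hsin_one := han.eqOn_zero_of_preconnected_of_frequently_eq_zero isPreconnected_univ
    (mem_univ y) hfreq (mem_univ 0)
  simp only [Real.cosh_zero, Pi.zero_apply] at hsin_one
  exact (Real.sin_pos_of_pos_of_lt_pi one_pos (by linarith [Real.pi_gt_three])).ne' hsin_one

lemma notMem_residualJuliaSet_sin (y : ℝ) :
    (π / 2 + y * Complex.I : ℂ) ∉ ResidualJuliaSet Complex.sin := by
  obtain ⟨l, hl, hIoo⟩ := mem_nhdsLT_iff_exists_Ioo_subset.1
    ((eventually_sin_cosh_ne_zero y).filter_mono (nhdsLT_le_nhdsNE y))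
  have hc : Continuous fun t : ℝ => (π / 2 + t * Complex.I : ℂ) := by fun_prop
  refine notMem_residualJuliaSet_of_mem_closure (isPreconnected_Ioo.image _ hc.continuousOn)
    (image_subset_iff.2 fun t ht => mem_fatouSet_sin_of_sin_cosh_ne_zero (hIoo ht)) ?_
  refine image_closure_subset_closure_image hc ⟨y, ?_, rfl⟩
  rw [closure_Ioo (ne_of_lt hl)]
  exact right_mem_Icc.2 (le_of_lt hl)

/-- The residual Julia set of `sin z` is not a spider's web. -/
theorem residualJulia_sin_not_spidersWeb : ¬ SpidersWeb (ResidualJuliaSet Complex.sin) := by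
  rintro ⟨-, G, hG, -, hfr, hunion⟩
  set c : ℝ → ℂ := fun y => π / 2 + y * Complex.I
  have hc : Isometry c := Isometry.of_dist_eq fun s t => by
    simp [c, dist_eq_norm, ← sub_mul, ← Complex.ofReal_sub]
  obtain ⟨k, hk⟩ : ∃ k, c 0 ∈ G k := mem_iUnion.1 (hunion ▸ mem_univ _)
  obtain ⟨-, -, hGk, -⟩ := hG k
  have hbounded : IsBounded (c ⁻¹' G k) := hc.antilipschitz.isBounded_preimage hGk
  -- the line through `π / 2` leaves the bounded domain `G k`, so it meets its boundary
  obtain ⟨y, hy⟩ := nonempty_frontier_iff.2 ⟨⟨0, hk⟩,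
    fun h => NormedSpace.unbounded_univ ℝ ℝ (h ▸ hbounded)⟩
  exact notMem_residualJuliaSet_sin y (hfr k (hc.continuous.frontier_preimage_subset _ hy))

end
end
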